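/- arXiv:2501.03914 — 2 statements merged into one kernel-verified Lean document; each statement's English description precedes it below -/
import Mathlib

section
/- With H, M, P, W as in the extended state-cover setting, let L = L_k(P), L' = L_{k+1}(P), and Z = W[L']. If H(z) = M(z) for all z ∈ Z, then the relation ∼ = {(eval_H(l), eval_M(l)) | l ∈ L} is a bisimulation between H and M. -/
/-- Syntactic terms for series-parallel pomsets over alphabet `σ`. -/
inductive SPTerm (σ : Type) : Type
  | eps : SPTerm σ
  | letter (a : σ) : SPTerm σ
  | seq (t u : SPTerm σ) : SPTerm σ
  | par (t u : SPTerm σ) : SPTerm σ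

/-- Semantic equality of terms: the congruence generated by associativity of
both compositions, commutativity of `par`, and neutrality of `eps`.
By freeness of SP in the variety of bimonoids, two terms denote the same
series-parallel pomset iff they are related by this relation. -/
inductive SPEquiv {σ : Type} : SPTerm σ → SPTerm σ → Prop
  | refl (t) : SPEquiv t t
  | symm {t u} : SPEquiv t u → SPEquiv u t
  | trans {t u v} : SPEquiv t u → SPEquiv u v → SPEquiv t v
  | seq_congr {t t' u u'} : SPEquiv t t' → SPEquiv u u' → SPEquiv (.seq t u) (.seq t' u')
  | par_congr {t t' u u'} : SPEquiv t t' → SPEquiv u u' → SPEquiv (.par t u) (.par t' u')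
  | seq_assoc (t u v) : SPEquiv (.seq (.seq t u) v) (.seq t (.seq u v))
  | par_assoc (t u v) : SPEquiv (.par (.par t u) v) (.par t (.par u v))
  | par_comm (t u) : SPEquiv (.par t u) (.par u t)
  | seq_eps_left (t) : SPEquiv (.seq .eps t) t
  | seq_eps_right (t) : SPEquiv (.seq t .eps) t
  | par_eps (t) : SPEquiv (.par t .eps) t

def SPSetoid (σ : Type) : Setoid (SPTerm σ) :=
  ⟨SPEquiv, ⟨SPEquiv.refl, SPEquiv.symm, SPEquiv.trans⟩⟩

/-- Series-parallel pomsets over `σ`. -/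
def SP (σ : Type) : Type := Quotient (SPSetoid σ)

def SP.mk {σ : Type} (t : SPTerm σ) : SP σ := Quotient.mk (SPSetoid σ) t

/-- The empty pomset ε. -/
def SP.eps {σ : Type} : SP σ := SP.mk .eps

/-- The singleton pomset labelled by `a`. -/
def SP.letter {σ : Type} (a : σ) : SP σ := SP.mk (.letter a)

/-- Sequential composition of series-parallel pomsets. -/
def SP.seq {σ : Type} : SP σ → SP σ → SP σ :=
  Quotient.map₂ SPTerm.seq (fun _ _ h _ _ h' => SPEquiv.seq_congr h h')

/-- Parallel composition of series-parallel pomsets. -/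
def SP.par {σ : Type} : SP σ → SP σ → SP σ :=
  Quotient.map₂ SPTerm.par (fun _ _ h _ _ h' => SPEquiv.par_congr h h')

/-- A bimonoid structure on `M`: two associative operations, `par`
additionally commutative, sharing the neutral element `one`. -/
structure BimonoidStr (M : Type) where
  seq : M → M → M
  par : M → M → M
  one : M
  seq_assoc : ∀ a b c, seq (seq a b) c = seq a (seq b c)
  par_assoc : ∀ a b c, par (par a b) c = par a (par b c)
  par_comm : ∀ a b, par a b = par b a
  seq_one : ∀ a, seq a one = a
  one_seq : ∀ a, seq one a = a
  par_one : ∀ a, par a one = a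

/-- Evaluation of a term in a bimonoid, extending `i : σ → M`. -/
def termEval {σ M : Type} (str : BimonoidStr M) (i : σ → M) : SPTerm σ → M
  | .eps => str.one
  | .letter a => i a
  | .seq t u => str.seq (termEval str i t) (termEval str i u)
  | .par t u => str.par (termEval str i t) (termEval str i u)

theorem termEval_congr {σ M : Type} (str : BimonoidStr M) (i : σ → M)
    {t u : SPTerm σ} (h : SPEquiv t u) : termEval str i t = termEval str i u := by
  induction h with
  | refl => rfl
  | symm _ ih => exact ih.symm
  | trans _ _ ih1 ih2 => exact ih1.trans ih2
  | seq_congr _ _ ih1 ih2 => simp only [termEval, ih1, ih2]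
  | par_congr _ _ ih1 ih2 => simp only [termEval, ih1, ih2]
  | seq_assoc t u v => simp only [termEval]; exact str.seq_assoc _ _ _
  | par_assoc t u v => simp only [termEval]; exact str.par_assoc _ _ _
  | par_comm t u => simp only [termEval]; exact str.par_comm _ _
  | seq_eps_left t => simp only [termEval]; exact str.one_seq _
  | seq_eps_right t => simp only [termEval]; exact str.seq_one _
  | par_eps t => simp only [termEval]; exact str.par_one _

/-- A pomset recognizer with state set `M`: a finite bimonoid together with
an interpretation of letters and a set of accepting states. -/
structure Recognizer (σ M : Type) where
  fin : Finite M
  str : BimonoidStr M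
  i : σ → M
  F : Set M

/-- The unique homomorphic extension of `R.i` to series-parallel pomsets. -/
def Recognizer.eval {σ M : Type} (R : Recognizer σ M) : SP σ → M :=
  Quotient.lift (termEval R.str R.i) (fun _ _ h => termEval_congr R.str R.i h)

/-- `R` accepts the pomset `w`. -/
def Recognizer.accepts {σ M : Type} (R : Recognizer σ M) (w : SP σ) : Prop :=
  R.eval w ∈ R.F

/-- The language of a recognizer. -/
def Recognizer.lang {σ M : Type} (R : Recognizer σ M) : Set (SP σ) :=
  {w | R.accepts w}

/-- 1-contexts: series-parallel pomsets with exactly one placeholder □. -/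
inductive Ctx (σ : Type) : Type
  | hole : Ctx σ
  | seqL (c : Ctx σ) (w : SP σ) : Ctx σ
  | seqR (w : SP σ) (c : Ctx σ) : Ctx σ
  | parL (c : Ctx σ) (w : SP σ) : Ctx σ
  | parR (w : SP σ) (c : Ctx σ) : Ctx σ

/-- Substitution of a pomset for the placeholder of a context: `c[z]`. -/
def Ctx.app {σ : Type} : Ctx σ → SP σ → SP σ
  | .hole, z => z
  | .seqL c w, z => SP.seq (c.app z) w
  | .seqR w c, z => SP.seq w (c.app z)
  | .parL c w, z => SP.par (c.app z) w
  | .parR w c, z => SP.par w (c.app z)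

/-- `c` distinguishes `w1` and `w2` in `R`: exactly one of `c[w1]`, `c[w2]` is accepted. -/
def Distinguishes {σ M : Type} (R : Recognizer σ M) (c : Ctx σ) (w1 w2 : SP σ) : Prop :=
  ¬ (R.accepts (c.app w1) ↔ R.accepts (c.app w2))

/-- Every state admits an access sequence. -/
def ReachablePR {σ M : Type} (R : Recognizer σ M) : Prop :=
  ∀ m : M, ∃ w : SP σ, R.eval w = m

/-- A minimal recognizer: reachable, and any two distinct states (given by
access sequences) are distinguished by some 1-context. -/
def MinimalPR {σ M : Type} (R : Recognizer σ M) : Prop :=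
  ReachablePR R ∧ ∀ w1 w2 : SP σ, R.eval w1 ≠ R.eval w2 → ∃ c : Ctx σ, Distinguishes R c w1 w2

/-- A characterisation set: contains □ and distinguishes every distinguishable
pair of states (given by access sequences). -/
def CharSet {σ M : Type} (R : Recognizer σ M) (W : Set (Ctx σ)) : Prop :=
  Ctx.hole ∈ W ∧
  ∀ w1 w2 : SP σ, (∃ c : Ctx σ, Distinguishes R c w1 w2) → ∃ c ∈ W, Distinguishes R c w1 w2

/-- A state cover: contains ε and an access sequence for every state. -/
def StateCover {σ M : Type} (R : Recognizer σ M) (P : Set (SP σ)) : Prop :=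
  SP.eps ∈ P ∧ ∀ m : M, ∃ p ∈ P, R.eval p = m

/-- `Lcov P i`: all pomsets obtained by filling a multi-context of depth at
most `i` with elements of `P`.  A depth-0 multi-context is a placeholder
(filled by an element of `P`), a letter, or ε; a filled multi-context of depth
at most `i+1` is either of depth at most `i` or a sequential or parallel
composition of two filled multi-contexts of depth at most `i`. -/
def Lcov {σ : Type} (P : Set (SP σ)) : ℕ → Set (SP σ)
  | 0 => P ∪ Set.range SP.letter ∪ {SP.eps}
  | i + 1 => Lcov P i ∪
      {w | ∃ u ∈ Lcov P i, ∃ v ∈ Lcov P i, w = SP.seq u v ∨ w = SP.par u v}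

/-- A bisimulation between two pomset recognizers: related states agree on
acceptance and the relation is compatible with both operations. -/
def IsBisim {σ M1 M2 : Type} (R1 : Recognizer σ M1) (R2 : Recognizer σ M2)
    (r : M1 → M2 → Prop) : Prop :=
  (∀ m1 m2, r m1 m2 → (m1 ∈ R1.F ↔ m2 ∈ R2.F)) ∧
  (∀ m1 m2 m1' m2', r m1 m2 → r m1' m2' →
    r (R1.str.seq m1 m1') (R2.str.seq m2 m2') ∧ r (R1.str.par m1 m1') (R2.str.par m2 m2'))

/-! The pairs `(eval_H l, eval_M l)` for `l ∈ L_i(P)` form an increasing chain of subsets of the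
finite set `mH × mM`. The state cover gives at least `n` pairs at level 0, and agreement on `W[L_{k+1}]`
makes a pair at level `k + 1` determined by its `M`-component, so level `k + 1` has at most `n + k`
pairs. Hence the chain does not grow at some level `i ≤ k`; since `L_{i+1}` is generated from `L_i`
by the two compositions, it then stays constant, so level `k` is closed under both compositions. -/

theorem Set.succ_subset_of_ncard_le_add {α : Type*} {S : ℕ → Set α} {k : ℕ} (hmono : Monotone S)
    (hstep : ∀ i, S (i + 1) ⊆ S i → S (i + 2) ⊆ S (i + 1))
    (hfin : (S (k + 1)).Finite) (hcard : (S (k + 1)).ncard ≤ (S 0).ncard + k) :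
    S (k + 1) ⊆ S k := by
  by_contra hk
  have hstable : ∀ i, S (i + 1) ⊆ S i → ∀ j, i ≤ j → S (j + 1) ⊆ S j := by
    intro i hi j hij
    induction j, hij using Nat.le_induction with
    | base => exact hi
    | succ j _ ih => exact hstep j ih
  have hgrow : ∀ i ≤ k, S i ⊂ S (i + 1) := fun i hi =>
    (hmono i.le_succ).ssubset_of_not_subset fun hi' => hk (hstable i hi' k hi)
  have hsize : ∀ i ≤ k + 1, (S 0).ncard + i ≤ (S i).ncard := by
    intro i hi
    induction i with
    | zero => simp
    | succ i ih =>
      have hlt := Set.ncard_lt_ncard (hgrow i (by omega)) (hfin.subset (hmono hi))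
      have := ih (by omega)
      omega
  have := hsize (k + 1) le_rfl
  omega

def SPCompatible {σ X : Type} (f : SP σ → X) : Prop :=
  ∀ u u' v v', f u = f u' → f v = f v' →
    f (SP.seq u v) = f (SP.seq u' v') ∧ f (SP.par u v) = f (SP.par u' v')

theorem SPCompatible.prodMk {σ X Y : Type} {f : SP σ → X} {g : SP σ → Y}
    (hf : SPCompatible f) (hg : SPCompatible g) : SPCompatible fun l => (f l, g l) := by
  intro u u' v v' hu hv
  simp only [Prod.mk.injEq] at hu hv ⊢
  exact ⟨⟨(hf u u' v v' hu.1 hv.1).1, (hg u u' v v' hu.2 hv.2).1⟩,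
    ⟨(hf u u' v v' hu.1 hv.1).2, (hg u u' v v' hu.2 hv.2).2⟩⟩

namespace Recognizer

variable {σ N : Type} (R : Recognizer σ N)

theorem eval_seq (u v : SP σ) : R.eval (SP.seq u v) = R.str.seq (R.eval u) (R.eval v) := by
  induction u using Quotient.inductionOn
  induction v using Quotient.inductionOn
  rfl

theorem eval_par (u v : SP σ) : R.eval (SP.par u v) = R.str.par (R.eval u) (R.eval v) := by
  induction u using Quotient.inductionOn
  induction v using Quotient.inductionOn
  rfl

theorem spCompatible_eval : SPCompatible R.eval := by
  intro u u' v v' hu hv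
  simp only [eval_seq, eval_par, hu, hv, and_self]

theorem eval_app_congr (c : Ctx σ) {z z' : SP σ} (h : R.eval z = R.eval z') :
    R.eval (c.app z) = R.eval (c.app z') := by
  induction c with
  | hole => exact h
  | seqL c w ih | seqR w c ih => simp only [Ctx.app, eval_seq, ih]
  | parL c w ih | parR w c ih => simp only [Ctx.app, eval_par, ih]

end Recognizer

section Lcov

variable {σ X : Type} (P : Set (SP σ))

theorem Lcov_mono : Monotone (Lcov P) :=
  monotone_nat_of_le_succ fun _ => Set.subset_union_left

theorem image_Lcov_add_two_subset {f : SP σ → X} (hf : SPCompatible f) {i : ℕ}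
    (h : f '' Lcov P (i + 1) ⊆ f '' Lcov P i) :
    f '' Lcov P (i + 2) ⊆ f '' Lcov P (i + 1) := by
  rintro _ ⟨w, hw | ⟨u, hu, v, hv, huv⟩, rfl⟩
  · exact ⟨w, hw, rfl⟩
  obtain ⟨u', hu', hfu⟩ := h ⟨u, hu, rfl⟩
  obtain ⟨v', hv', hfv⟩ := h ⟨v, hv, rfl⟩
  have hcompat := hf u' u v' v hfu hfv
  rcases huv with rfl | rfl
  · exact ⟨SP.seq u' v', Or.inr ⟨u', hu', v', hv', Or.inl rfl⟩, hcompat.1⟩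
  · exact ⟨SP.par u' v', Or.inr ⟨u', hu', v', hv', Or.inr rfl⟩, hcompat.2⟩

end Lcov

section TestSuite

variable {σ mH mM : Type} (H : Recognizer σ mH) (M : Recognizer σ mM)

theorem eval_eq_of_agree_of_charSet (hH : MinimalPR H) {W : Set (Ctx σ)} (hW : CharSet H W)
    {L : Set (SP σ)} (hagree : ∀ c ∈ W, ∀ l ∈ L, (H.accepts (c.app l) ↔ M.accepts (c.app l)))
    {l₁ l₂ : SP σ} (hl₁ : l₁ ∈ L) (hl₂ : l₂ ∈ L) (hM : M.eval l₁ = M.eval l₂) :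
    H.eval l₁ = H.eval l₂ := by
  by_contra hne
  obtain ⟨c, hcW, hc⟩ := hW.2 l₁ l₂ (hH.2 l₁ l₂ hne)
  apply hc
  rw [hagree c hcW l₁ hl₁, hagree c hcW l₂ hl₂, Recognizer.accepts, Recognizer.accepts,
    M.eval_app_congr c hM]

theorem card_le_ncard_image_Lcov_zero {P : Set (SP σ)} (hP : StateCover H P) :
    Nat.card mH ≤ ((fun l => (H.eval l, M.eval l)) '' Lcov P 0).ncard := by
  have := H.fin
  have := M.fin
  have hfst : Prod.fst '' ((fun l => (H.eval l, M.eval l)) '' Lcov P 0) = Set.univ := by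
    refine Set.eq_univ_of_forall fun m => ?_
    obtain ⟨p, hp, rfl⟩ := hP.2 m
    exact ⟨_, ⟨p, Or.inl (Or.inl hp), rfl⟩, rfl⟩
  rw [← Set.ncard_univ, ← hfst]
  exact Set.ncard_image_le (Set.toFinite _)

theorem isBisim_of_image_Lcov_succ_subset {P : Set (SP σ)} {k : ℕ}
    (hacc : ∀ l ∈ Lcov P k, (H.accepts l ↔ M.accepts l))
    (hclosed : (fun l => (H.eval l, M.eval l)) '' Lcov P (k + 1) ⊆
      (fun l => (H.eval l, M.eval l)) '' Lcov P k) :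
    IsBisim H M (fun x y => ∃ l ∈ Lcov P k, H.eval l = x ∧ M.eval l = y) := by
  have hrel : ∀ w ∈ Lcov P (k + 1), ∃ l ∈ Lcov P k, H.eval l = H.eval w ∧ M.eval l = M.eval w :=
    fun w hw => by
      obtain ⟨l, hl, hlw⟩ := hclosed ⟨w, hw, rfl⟩
      exact ⟨l, hl, Prod.ext_iff.1 hlw⟩
  refine ⟨fun _ _ ⟨l, hl, hH, hM⟩ => hH ▸ hM ▸ hacc l hl, ?_⟩
  rintro _ _ _ _ ⟨u, hu, rfl, rfl⟩ ⟨v, hv, rfl, rfl⟩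
  rw [← H.eval_seq, ← M.eval_seq, ← H.eval_par, ← M.eval_par]
  exact ⟨hrel _ (Or.inr ⟨u, hu, v, hv, Or.inl rfl⟩), hrel _ (Or.inr ⟨u, hu, v, hv, Or.inr rfl⟩)⟩

end TestSuite

theorem test_suite_induces_bisim_general {σ mH mM : Type} (H : Recognizer σ mH) (M : Recognizer σ mM)
    (n k : ℕ) (hH : MinimalPR H)
    (hn : Nat.card mH = n) (hhi : Nat.card mM ≤ n + k)
    (P : Set (SP σ)) (hP : StateCover H P)
    (W : Set (Ctx σ)) (hW : CharSet H W)
    (hagree : ∀ c ∈ W, ∀ l ∈ Lcov P (k + 1), (H.accepts (c.app l) ↔ M.accepts (c.app l))) :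
    IsBisim H M (fun x y => ∃ l ∈ Lcov P k, H.eval l = x ∧ M.eval l = y) := by
  have := H.fin
  have := M.fin
  set f : SP σ → mH × mM := fun l => (H.eval l, M.eval l)
  have hsnd_injOn : Set.InjOn Prod.snd (f '' Lcov P (k + 1)) := by
    rintro _ ⟨l₁, hl₁, rfl⟩ _ ⟨l₂, hl₂, rfl⟩ hM
    exact Prod.ext (eval_eq_of_agree_of_charSet H M hH hW hagree hl₁ hl₂ hM) hM
  have hclosed : f '' Lcov P (k + 1) ⊆ f '' Lcov P k := by
    refine Set.succ_subset_of_ncard_le_add (fun _ _ hij => Set.image_mono (Lcov_mono P hij))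
      (fun _ => image_Lcov_add_two_subset P (H.spCompatible_eval.prodMk M.spCompatible_eval))
      (Set.toFinite _) ?_
    have hlow : Nat.card mH ≤ (f '' Lcov P 0).ncard := card_le_ncard_image_Lcov_zero H M hP
    calc (f '' Lcov P (k + 1)).ncard = (Prod.snd '' (f '' Lcov P (k + 1))).ncard :=
          hsnd_injOn.ncard_image.symm
      _ ≤ Nat.card mM := Set.ncard_le_card _
      _ ≤ (f '' Lcov P 0).ncard + k := by omega
  refine isBisim_of_image_Lcov_succ_subset H M (fun l hl => ?_) hclosed
  simpa only [Ctx.app] using hagree .hole hW.1 l (Lcov_mono P k.le_succ hl)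

/-- if `H` and `M` agree on the test suite `Z = W[L_{k+1}(P)]`,
then `{(eval_H l, eval_M l) | l ∈ L_k(P)}` is a bisimulation between `H` and `M`. -/
theorem test_suite_induces_bisim {σ mH mM : Type} (H : Recognizer σ mH) (M : Recognizer σ mM)
    (n k : ℕ) (hH : MinimalPR H) (hM : MinimalPR M)
    (hn : Nat.card mH = n) (hlo : n ≤ Nat.card mM) (hhi : Nat.card mM ≤ n + k)
    (P : Set (SP σ)) (hP : StateCover H P)
    (W : Set (Ctx σ)) (hW : CharSet H W)
    (hagree : ∀ c ∈ W, ∀ l ∈ Lcov P (k + 1), (H.accepts (c.app l) ↔ M.accepts (c.app l))) :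
    IsBisim H M (fun x y => ∃ l ∈ Lcov P k, H.eval l = x ∧ M.eval l = y) :=
  test_suite_induces_bisim_general H M n k hH hn hhi P hP W hW hagree
end

section
/- Under the assumptions that H and M are minimal pomset recognizers over the same alphabet with |M| − |H| between 0 and k, P a state cover of H and W a characterisation set of H, H and M agree on the finite test suite Z = W[L_{k+1}(P)] if and only if they recognize the same language. -/
/-! ### Auxiliary lemmas for the W-method -/

/-- Height of a term. -/
def SPTerm.height {σ : Type} : SPTerm σ → ℕ
  | .eps => 0
  | .letter _ => 0
  | .seq t u => max t.height u.height + 1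
  | .par t u => max t.height u.height + 1

lemma Recognizer.eval_mk {σ m : Type} (R : Recognizer σ m) (t : SPTerm σ) :
    R.eval (SP.mk t) = termEval R.str R.i t := rfl

lemma Recognizer.eval_seq_s13 {σ m : Type} (R : Recognizer σ m) (u v : SP σ) :
    R.eval (SP.seq u v) = R.str.seq (R.eval u) (R.eval v) := by
  induction u using Quotient.ind
  induction v using Quotient.ind
  rfl

lemma Recognizer.eval_par_s13 {σ m : Type} (R : Recognizer σ m) (u v : SP σ) :
    R.eval (SP.par u v) = R.str.par (R.eval u) (R.eval v) := by
  induction u using Quotient.ind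
  induction v using Quotient.ind
  rfl

lemma Recognizer.eval_ctx_congr {σ m : Type} (R : Recognizer σ m) (c : Ctx σ)
    {z z' : SP σ} (h : R.eval z = R.eval z') :
    R.eval (c.app z) = R.eval (c.app z') := by
  induction c <;>
    simp only [Ctx.app, Recognizer.eval_seq_s13, Recognizer.eval_par_s13, h, *]

lemma Lcov_succ {σ : Type} (P : Set (SP σ)) (i : ℕ) :
    Lcov P (i + 1) = Lcov P i ∪
      {w | ∃ u ∈ Lcov P i, ∃ v ∈ Lcov P i, w = SP.seq u v ∨ w = SP.par u v} := rfl

lemma Lcov_mono_s13 {σ : Type} (P : Set (SP σ)) :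
    ∀ {i j : ℕ}, i ≤ j → Lcov P i ⊆ Lcov P j := by
  intro i j h
  induction j with
  | zero => simpa [Nat.le_zero.mp h] using Set.Subset.rfl
  | succ j ih =>
    rcases Nat.lt_or_ge i (j + 1) with h' | h'
    · exact (ih (Nat.lt_succ_iff.mp h')).trans (by rw [Lcov_succ]; exact Set.subset_union_left)
    · have : i = j + 1 := le_antisymm h h'
      subst this; exact Set.Subset.rfl

lemma mk_mem_Lcov {σ : Type} (P : Set (SP σ)) (t : SPTerm σ) :
    SP.mk t ∈ Lcov P t.height := by
  induction t with
  | eps => exact Or.inr rfl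
  | letter a => exact Or.inl (Or.inr ⟨a, rfl⟩)
  | seq t u iht ihu =>
    refine Or.inr ⟨SP.mk t, Lcov_mono_s13 P (le_max_left _ _) iht,
      SP.mk u, Lcov_mono_s13 P (le_max_right _ _) ihu, Or.inl ?_⟩
    rfl
  | par t u iht ihu =>
    refine Or.inr ⟨SP.mk t, Lcov_mono_s13 P (le_max_left _ _) iht,
      SP.mk u, Lcov_mono_s13 P (le_max_right _ _) ihu, Or.inr ?_⟩
    rfl

/-- under the assumptions of the pomset W-method, `H` and `M`
agree on the finite test suite `Z = W[L_{k+1}(P)]` if and only if they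
recognize the same language. -/
theorem w_method_complete {σ mH mM : Type} (H : Recognizer σ mH) (M : Recognizer σ mM)
    (n k : ℕ) (hH : MinimalPR H) (hM : MinimalPR M)
    (hn : Nat.card mH = n) (hlo : n ≤ Nat.card mM) (hhi : Nat.card mM ≤ n + k)
    (P : Set (SP σ)) (hP : StateCover H P)
    (W : Set (Ctx σ)) (hW : CharSet H W) :
    (∀ c ∈ W, ∀ l ∈ Lcov P (k + 1), (H.accepts (c.app l) ↔ M.accepts (c.app l))) ↔
    (∀ w : SP σ, H.accepts w ↔ M.accepts w) := by
  haveI : Finite mH := H.fin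
  haveI : Finite mM := M.fin
  constructor
  · -- hard direction
    intro hZ
    -- Key transfer lemma
    have key : ∀ l ∈ Lcov P (k + 1), ∀ l' ∈ Lcov P (k + 1),
        M.eval l = M.eval l' → H.eval l = H.eval l' := by
      intro l hl l' hl' hMe
      by_contra hne
      obtain ⟨c, hc⟩ := hH.2 l l' hne
      obtain ⟨c', hc'W, hc'⟩ := hW.2 l l' ⟨c, hc⟩
      apply hc'
      have h1 := hZ c' hc'W l hl
      have h2 := hZ c' hc'W l' hl'
      have hMeq : M.eval (c'.app l) = M.eval (c'.app l') :=
        M.eval_ctx_congr c' hMe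
      rw [h1, h2]
      unfold Recognizer.accepts
      rw [hMeq]
    have hP0 : P ⊆ Lcov P 0 := fun p hp => Or.inl (Or.inl hp)
    -- the chain of reachable-state sets
    set S : ℕ → Set mM := fun i => M.eval '' Lcov P i with hS
    have hSmono : ∀ {i j}, i ≤ j → S i ⊆ S j := fun h =>
      Set.image_mono (Lcov_mono_s13 P h)
    -- lower bound on S 0
    have hcard0 : n ≤ (S 0).ncard := by
      choose pf hpf1 hpf2 using hP.2
      have hpfL : ∀ m, pf m ∈ Lcov P (k + 1) := fun m =>
        Lcov_mono_s13 P (Nat.zero_le _) (hP0 (hpf1 m))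
      set φ : mH → ↥(S 0) := fun m =>
        ⟨M.eval (pf m), ⟨pf m, hP0 (hpf1 m), rfl⟩⟩ with hφ
      have hinj : Function.Injective φ := by
        intro m m' h
        have : M.eval (pf m) = M.eval (pf m') := congrArg Subtype.val h
        have := key _ (hpfL m) _ (hpfL m') this
        rw [hpf2 m, hpf2 m'] at this
        exact this
      calc n = Nat.card mH := hn.symm
        _ ≤ Nat.card ↥(S 0) := Nat.card_le_card_of_injective φ hinj
        _ = (S 0).ncard := (Nat.card_coe_set_eq _)
    -- there is a stabilisation point i ≤ k
    have hstabex : ∃ i ≤ k, S (i + 1) ⊆ S i := by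
      by_contra hcon
      push_neg at hcon
      have hgrow : ∀ i ≤ k + 1, n + i ≤ (S i).ncard := by
        intro i hi
        induction i with
        | zero => simpa using hcard0
        | succ i ih =>
          have hik : i ≤ k := Nat.lt_succ_iff.mp hi
          have hss : S i ⊂ S (i + 1) :=
            ⟨hSmono (Nat.le_succ i), hcon i hik⟩
          have := Set.ncard_lt_ncard hss (Set.toFinite _)
          have := ih (hik.trans (Nat.le_succ k))
          omega
      have h1 := hgrow (k + 1) le_rfl
      have h2 : (S (k + 1)).ncard ≤ Nat.card mM := by
        rw [← Set.ncard_univ]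
        exact Set.ncard_le_ncard (Set.subset_univ _) Set.finite_univ
      omega
    obtain ⟨i, hik, hstab⟩ := hstabex
    -- every state is reached by L_k(P)
    have hall : ∀ j, S j ⊆ S i := by
      have hstep : ∀ j, S (i + j) ⊆ S i := by
        intro j
        induction j with
        | zero => exact Set.Subset.rfl
        | succ j ih =>
          rintro m ⟨w, hw, rfl⟩
          rcases hw with hw | ⟨u, hu, v, hv, hw⟩
          · exact ih ⟨w, hw, rfl⟩
          · obtain ⟨u', hu', heu⟩ := ih ⟨u, hu, rfl⟩
            obtain ⟨v', hv', hev⟩ := ih ⟨v, hv, rfl⟩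
            have hmem : ∀ (f : SP σ → SP σ → SP σ), f = SP.seq ∨ f = SP.par →
                M.eval (f u' v') ∈ S i := by
              rintro f hf
              refine hstab ⟨f u' v', Or.inr ⟨u', hu', v', hv', ?_⟩, rfl⟩
              rcases hf with rfl | rfl
              · exact Or.inl rfl
              · exact Or.inr rfl
            rcases hw with rfl | rfl
            · have := hmem SP.seq (Or.inl rfl)
              rwa [M.eval_seq_s13, heu, hev, ← M.eval_seq_s13] at this
            · have := hmem SP.par (Or.inr rfl)
              rwa [M.eval_par_s13, heu, hev, ← M.eval_par_s13] at this
      intro j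
      rcases Nat.le_total j i with h | h
      · exact (hSmono h).trans Set.Subset.rfl
      · obtain ⟨d, rfl⟩ := Nat.exists_eq_add_of_le h
        exact hstep d
    have hrep : ∀ m : mM, ∃ l, l ∈ Lcov P k ∧ M.eval l = m := by
      intro m
      obtain ⟨w, hw⟩ := hM.1 m
      induction w using Quotient.ind with
      | _ t =>
        have : M.eval (SP.mk t) ∈ S t.height := ⟨SP.mk t, mk_mem_Lcov P t, rfl⟩
        obtain ⟨l, hl, hel⟩ := hSmono hik (hall t.height this)
        exact ⟨l, hl, hel.trans hw⟩
    choose rep hrep1 hrep2 using hrep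
    have hrepL : ∀ m, rep m ∈ Lcov P (k + 1) := fun m =>
      Lcov_mono_s13 P (Nat.le_succ k) (hrep1 m)
    set g : mM → mH := fun m => H.eval (rep m) with hg
    have gkey : ∀ l ∈ Lcov P (k + 1), g (M.eval l) = H.eval l := by
      intro l hl
      exact key _ (hrepL _) _ hl (hrep2 _)
    have gseq : ∀ m1 m2, g (M.str.seq m1 m2) = H.str.seq (g m1) (g m2) := by
      intro m1 m2
      have hmem : SP.seq (rep m1) (rep m2) ∈ Lcov P (k + 1) :=
        Or.inr ⟨rep m1, hrep1 m1, rep m2, hrep1 m2, Or.inl rfl⟩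
      have : M.str.seq m1 m2 = M.eval (SP.seq (rep m1) (rep m2)) := by
        rw [M.eval_seq_s13, hrep2, hrep2]
      rw [this, gkey _ hmem, H.eval_seq_s13]
    have gpar : ∀ m1 m2, g (M.str.par m1 m2) = H.str.par (g m1) (g m2) := by
      intro m1 m2
      have hmem : SP.par (rep m1) (rep m2) ∈ Lcov P (k + 1) :=
        Or.inr ⟨rep m1, hrep1 m1, rep m2, hrep1 m2, Or.inr rfl⟩
      have : M.str.par m1 m2 = M.eval (SP.par (rep m1) (rep m2)) := by
        rw [M.eval_par_s13, hrep2, hrep2]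
      rw [this, gkey _ hmem, H.eval_par_s13]
    have hepsL : (SP.eps : SP σ) ∈ Lcov P (k + 1) :=
      Lcov_mono_s13 P (Nat.zero_le _) (Or.inr rfl)
    have gone : g M.str.one = H.str.one := by
      have : M.str.one = M.eval (SP.eps : SP σ) := rfl
      rw [this, gkey _ hepsL]; rfl
    have gletter : ∀ a : σ, g (M.i a) = H.i a := by
      intro a
      have hmem : SP.letter a ∈ Lcov P (k + 1) :=
        Lcov_mono_s13 P (Nat.zero_le _) (Or.inl (Or.inr ⟨a, rfl⟩))
      have : M.i a = M.eval (SP.letter a) := rfl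
      rw [this, gkey _ hmem]; rfl
    have gacc : ∀ m : mM, (g m ∈ H.F ↔ m ∈ M.F) := by
      intro m
      have h := hZ Ctx.hole hW.1 (rep m) (hrepL m)
      simp only [Ctx.app] at h
      unfold Recognizer.accepts at h
      rw [hrep2 m] at h
      exact h
    have geval : ∀ w : SP σ, H.eval w = g (M.eval w) := by
      intro w
      induction w using Quotient.ind with
      | _ t =>
        induction t with
        | eps => exact gone.symm
        | letter a => exact (gletter a).symm
        | seq t u iht ihu =>
          have e : (Quotient.mk (SPSetoid σ) (SPTerm.seq t u)) =
              SP.seq (Quotient.mk (SPSetoid σ) t) (Quotient.mk (SPSetoid σ) u) := rfl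
          change H.eval (SP.seq (SP.mk t) (SP.mk u)) = g (M.eval (SP.seq (SP.mk t) (SP.mk u)))
          rw [H.eval_seq_s13, M.eval_seq_s13, gseq]
          exact congrArg₂ _ iht ihu
        | par t u iht ihu =>
          have e : (Quotient.mk (SPSetoid σ) (SPTerm.par t u)) =
              SP.par (Quotient.mk (SPSetoid σ) t) (Quotient.mk (SPSetoid σ) u) := rfl
          change H.eval (SP.par (SP.mk t) (SP.mk u)) = g (M.eval (SP.par (SP.mk t) (SP.mk u)))
          rw [H.eval_par_s13, M.eval_par_s13, gpar]
          exact congrArg₂ _ iht ihu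
    intro w
    unfold Recognizer.accepts
    rw [geval w]
    exact gacc _
  · -- easy direction
    intro hlang c _ l _
    exact hlang _
end
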